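/- arXiv:1206.0326 — 4 statements merged into one kernel-verified Lean document; each statement's English description precedes it below -/
import Mathlib

section
/- For a field F and finite-dimensional commutative F-algebras R and S over a perfect field F of characteristic p, the ratio dim(R⊗S)^(p)/dim(R⊗S) equals (dim R^(p)/dim R)·(dim S^(p)/dim S); equivalently, dim((R⊗_F S)^(p)) = dim(R^(p)) · dim(S^(p)). -/
/-!
In characteristic `p` the Frobenius `x ↦ x ^ p` is additive and sends `r ⊗ₜ s` to
`r ^ p ⊗ₜ s ^ p`, so the span of the `p`-th powers of `R ⊗ S` is the span of the tensors
`r ^ p ⊗ₜ s ^ p`, i.e. the image of `span R^(p) ⊗ span S^(p)` in `R ⊗ S`. Over a field this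
image is isomorphic to `span R^(p) ⊗ span S^(p)`, whose dimension is the product.
-/

open Pointwise

/-- `pw x n` is the `n`-th power of `x` in any magma, for `n ≥ 1`
(with the junk value `pw x 0 = x`). -/
def pw {R : Type*} [Mul R] (x : R) : ℕ → R
  | 0 => x
  | 1 => x
  | n + 2 => x * pw x (n + 1)

open TensorProduct

lemma zero_pw {M : Type*} [MulZeroClass M] : ∀ n, pw (0 : M) n = 0
  | 0 | 1 => rfl
  | _ + 2 => zero_mul _

lemma pw_eq_pow {M : Type*} [Monoid M] (x : M) : ∀ n, n ≠ 0 → pw x n = x ^ n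
  | 1, _ => (pow_one x).symm
  | n + 2, _ => by
    rw [pw, pw_eq_pow x (n + 1) n.succ_ne_zero, ← pow_succ']

lemma map_pw {G M N : Type*} [Mul M] [Mul N] [FunLike G M N] [MulHomClass G M N] (f : G)
    (x : M) : ∀ n, f (pw x n) = pw (f x) n
  | 0 | 1 => rfl
  | n + 2 => by rw [pw, map_mul, map_pw f x (n + 1), pw]

/-- `R` has no characteristic of its own, so the binomial argument is run in `Unitization F R`. -/
lemma add_pw_char {F R : Type*} [CommRing F] (p : ℕ) [Fact p.Prime] [CharP F p]
    [NonUnitalCommRing R] [Module F R] [SMulCommClass F R R] [IsScalarTower F R R] (x y : R) :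
    pw (x + y) p = pw x p + pw y p := by
  have : CharP (Unitization F R) p :=
    charP_of_injective_algebraMap Unitization.inl_injective p
  have hp : p ≠ 0 := (Fact.out : p.Prime).ne_zero
  have inr_pw (z : R) : ((pw z p : R) : Unitization F R) = (z : Unitization F R) ^ p := by
    rw [← pw_eq_pow _ p hp]
    exact map_pw (Unitization.inrNonUnitalAlgHom F R) z p
  apply Unitization.inr_injective (R := F)
  rw [inr_pw, Unitization.inr_add, Unitization.inr_add, inr_pw, inr_pw, add_pow_char]

namespace Algebra.TensorProduct

variable {F A B : Type*}

instance instNonUnitalCommSemiring [CommSemiring F]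
    [NonUnitalCommSemiring A] [Module F A] [SMulCommClass F A A] [IsScalarTower F A A]
    [NonUnitalCommSemiring B] [Module F B] [SMulCommClass F B B] [IsScalarTower F B B] :
    NonUnitalCommSemiring (A ⊗[F] B) where
  mul_comm x y := by
    induction x with
    | zero => rw [zero_mul, mul_zero]
    | add x₁ x₂ h₁ h₂ => rw [add_mul, mul_add, h₁, h₂]
    | tmul a b =>
      induction y with
      | zero => rw [zero_mul, mul_zero]
      | add y₁ y₂ h₁ h₂ => rw [add_mul, mul_add, h₁, h₂]
      | tmul c d => rw [tmul_mul_tmul, tmul_mul_tmul, mul_comm a c, mul_comm b d]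

instance instNonUnitalCommRing [CommRing F]
    [NonUnitalCommRing A] [Module F A] [SMulCommClass F A A] [IsScalarTower F A A]
    [NonUnitalCommRing B] [Module F B] [SMulCommClass F B B] [IsScalarTower F B B] :
    NonUnitalCommRing (A ⊗[F] B) where
  __ := instNonUnitalRing
  __ := instNonUnitalCommSemiring

end Algebra.TensorProduct

lemma tmul_pw {F A B : Type*} [CommSemiring F]
    [NonUnitalSemiring A] [Module F A] [SMulCommClass F A A] [IsScalarTower F A A]
    [NonUnitalSemiring B] [Module F B] [SMulCommClass F B B] [IsScalarTower F B B]
    (a : A) (b : B) : ∀ n, pw (a ⊗ₜ[F] b) n = pw a n ⊗ₜ[F] pw b n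
  | 0 | 1 => rfl
  | n + 2 => by rw [pw, tmul_pw a b (n + 1), pw, pw, Algebra.TensorProduct.tmul_mul_tmul]

lemma span_range_pw_tensorProduct {F R S : Type*} [CommRing F] (p : ℕ) [Fact p.Prime]
    [CharP F p]
    [NonUnitalCommRing R] [Module F R] [SMulCommClass F R R] [IsScalarTower F R R]
    [NonUnitalCommRing S] [Module F S] [SMulCommClass F S S] [IsScalarTower F S S] :
    Submodule.span F (Set.range fun t : R ⊗[F] S => pw t p) =
      Submodule.map₂ (TensorProduct.mk F R S) (Submodule.span F (Set.range fun x : R => pw x p))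
        (Submodule.span F (Set.range fun y : S => pw y p)) := by
  rw [Submodule.map₂_span_span]
  apply le_antisymm
  · rw [Submodule.span_le, Set.range_subset_iff]
    intro t
    rw [SetLike.mem_coe]
    induction t with
    | zero => rw [zero_pw]; exact Submodule.zero_mem _
    | add u v hu hv => rw [add_pw_char (F := F)]; exact Submodule.add_mem _ hu hv
    | tmul r s => exact Submodule.subset_span ⟨_, ⟨r, rfl⟩, _, ⟨s, rfl⟩, (tmul_pw r s p).symm⟩
  · apply Submodule.span_mono
    rintro _ ⟨_, ⟨r, rfl⟩, _, ⟨s, rfl⟩, rfl⟩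
    exact ⟨r ⊗ₜ s, tmul_pw r s p⟩

lemma Submodule.finrank_map₂_mk {K M N : Type*} [Field K] [AddCommGroup M] [Module K M]
    [AddCommGroup N] [Module K N] (V : Submodule K M) (W : Submodule K N) :
    Module.finrank K (Submodule.map₂ (TensorProduct.mk K M N) V W) =
      Module.finrank K V * Module.finrank K W := by
  rw [← TensorProduct.range_mapIncl,
    LinearMap.finrank_range_of_inj (Module.Flat.tensorProduct_mapIncl_injective_of_left V W),
    Module.finrank_tensorProduct]

open TensorProduct in
theorem stmt_7_general {F R S : Type*} [Field F] (p : ℕ) (hp : p.Prime) [CharP F p]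
    [NonUnitalCommRing R] [Module F R] [SMulCommClass F R R] [IsScalarTower F R R]
    [NonUnitalCommRing S] [Module F S] [SMulCommClass F S S] [IsScalarTower F S S] :
    Module.finrank F (Submodule.span F (Set.range fun t : R ⊗[F] S => pw t p))
      = Module.finrank F (Submodule.span F (Set.range fun x : R => pw x p)) *
        Module.finrank F (Submodule.span F (Set.range fun y : S => pw y p)) := by
  have : Fact p.Prime := ⟨hp⟩
  rw [span_range_pw_tensorProduct p, Submodule.finrank_map₂_mk]

open TensorProduct in
theorem stmt_7 {F R S : Type*} [Field F] (p : ℕ) (hp : p.Prime) [CharP F p]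
    (hperf : ∀ a : F, ∃ b : F, b ^ p = a)
    [NonUnitalCommRing R] [Module F R] [SMulCommClass F R R] [IsScalarTower F R R]
    [FiniteDimensional F R]
    [NonUnitalCommRing S] [Module F S] [SMulCommClass F S S] [IsScalarTower F S S]
    [FiniteDimensional F S] :
    Module.finrank F (Submodule.span F (Set.range fun t : R ⊗[F] S => pw t p))
      = Module.finrank F (Submodule.span F (Set.range fun x : R => pw x p)) *
        Module.finrank F (Submodule.span F (Set.range fun y : S => pw y p)) :=
  stmt_7_general p hp
end

section
/- Let F be a field and d ≥ 1. Let R be the associative F-algebra presented by generators x, y, z_1, ..., z_{d-1} of degree 1, with relations xx = yy = 0 and all degree-3 monomials in the generators not containing the substring xy equal to 0. Then for every odd n > 2, the homogeneous component R_n has dimension 2d, and for every even n > 2, R_n has dimension d^2 + 1. -/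
noncomputable section

variable (F : Type*) [Field F] (d : ℕ)

/-- The generators `x = gen 0`, `y = gen 1`, `z_i = gen (i+1)` of the free algebra. -/
def gen (i : Fin (d + 1)) : FreeAlgebra F (Fin (d + 1)) := FreeAlgebra.ι F i

/-- The relators: `xx`, `yy`, and every product of three generators not containing
the consecutive substring `xy`. -/
def relSet : Set (FreeAlgebra F (Fin (d + 1))) :=
  {gen F d 0 * gen F d 0, gen F d 1 * gen F d 1} ∪
    {w | ∃ a b c : Fin (d + 1), w = gen F d a * gen F d b * gen F d c ∧
        ¬((a = 0 ∧ b = 1) ∨ (b = 0 ∧ c = 1))}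

/-- The relation setting each relator equal to `0`. -/
def rel : FreeAlgebra F (Fin (d + 1)) → FreeAlgebra F (Fin (d + 1)) → Prop :=
  fun u v => u ∈ relSet F d ∧ v = 0

/-- The presented algebra `R`. -/
abbrev Ralg := RingQuot (rel F d)

/-- The projection onto the presented algebra. -/
def proj : FreeAlgebra F (Fin (d + 1)) →ₐ[F] Ralg F d := RingQuot.mkAlgHom F (rel F d)

/-- The degree-`n` homogeneous component of `R`: the span of the images of all
words of length `n` in the generators. -/
def comp (n : ℕ) : Submodule F (Ralg F d) :=
  Submodule.span F
    (Set.range fun w : Fin n → Fin (d + 1) =>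
      proj F d (List.ofFn fun j => gen F d (w j)).prod)

/-!
The relators are monomials, so `R_n` is spanned by the images of the normal words of length `n`:
those with no factor `xx` or `yy` and no factor of length three avoiding `xy`. These images are
linearly independent: `R` acts on the formal span of all words, each generator prepending itself
and killing the non-normal words it produces, and the image of a normal word sends the empty word
to itself. A normal word of length at least three is `(xy)^m`, possibly preceded by a letter
other than `x` and followed by a letter other than `y`; counting by parity gives `d + d` normal
words of odd length and `d^2 + 1` of even length.
-/

namespace FreeAlgebra

open Classical

variable (R : Type*) {α : Type*} [CommSemiring R] (P : List α → Prop)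

def prependOp (a : α) : Module.End R (List α →₀ R) :=
  Finsupp.lsum R fun l => if P (a :: l) then Finsupp.lsingle (a :: l) else 0

theorem prependOp_single (a : α) (l : List α) (c : R) :
    prependOp R P a (Finsupp.single l c) =
      if P (a :: l) then Finsupp.single (a :: l) c else 0 := by
  rw [prependOp, Finsupp.lsum_single]
  split_ifs <;> rfl

variable {P}

theorem lift_prependOp_prod_cons (hP : ∀ a l, P (a :: l) → P l) (a : α) (w l : List α)
    (c : R) :
    lift R (prependOp R P) ((a :: w).map (ι R)).prod (Finsupp.single l c) =
      if P (a :: (w ++ l)) then Finsupp.single (a :: (w ++ l)) c else 0 := by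
  induction w generalizing a with
  | nil => simp [prependOp_single]
  | cons b w ih =>
    rw [List.map_cons, List.prod_cons, map_mul, Module.End.mul_apply, ih, lift_ι_apply,
      List.cons_append]
    by_cases hw : P (b :: (w ++ l))
    · rw [if_pos hw, prependOp_single]
    · have habw : ¬P (a :: b :: (w ++ l)) := fun h => hw (hP _ _ h)
      rw [if_neg hw, if_neg habw, map_zero]

theorem lift_prependOp_prod_single_nil (hP : ∀ a l, P (a :: l) → P l) {l : List α} (hl : P l) :
    lift R (prependOp R P) (l.map (ι R)).prod (Finsupp.single [] 1) = Finsupp.single l 1 := by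
  cases l with
  | nil => simp
  | cons a w => rw [lift_prependOp_prod_cons R hP, List.append_nil, if_pos hl]

theorem linearIndependent_mkAlgHom_prod (hP : ∀ a l, P (a :: l) → P l)
    {r : FreeAlgebra R α → FreeAlgebra R α → Prop}
    (hr : ∀ ⦃u v⦄, r u v → lift R (prependOp R P) u = lift R (prependOp R P) v) :
    LinearIndependent R fun l : {l // P l} => RingQuot.mkAlgHom R r (l.1.map (ι R)).prod := by
  let ev := LinearMap.applyₗ (R := R) (Finsupp.single [] 1) ∘ₗ
    (RingQuot.liftAlgHom R ⟨lift R (prependOp R P), hr⟩).toLinearMap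
  refine LinearIndependent.of_comp ev ?_
  convert (Finsupp.linearIndependent_single_one R (List α)).comp _ Subtype.val_injective
  ext1 l
  simp [ev, lift_prependOp_prod_single_nil R hP l.2]

end FreeAlgebra

namespace XYAlgebra

section Words

variable {d}

def Allowed (a b : Fin (d + 1)) : Prop := ¬(a = 0 ∧ b = 0) ∧ ¬(a = 1 ∧ b = 1)

def HasXY (a b c : Fin (d + 1)) : Prop := (a = 0 ∧ b = 1) ∨ (b = 0 ∧ c = 1)

-- Words with no relator as a factor.
def IsNormal : List (Fin (d + 1)) → Prop
  | a :: b :: c :: l => Allowed a b ∧ HasXY a b c ∧ IsNormal (b :: c :: l)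
  | [a, b] => Allowed a b
  | _ => True

theorem IsNormal.of_cons {a : Fin (d + 1)} : ∀ {l}, IsNormal (a :: l) → IsNormal l
  | [], _ | [_], _ => trivial
  | _ :: _ :: _, h => h.2.2

theorem not_isNormal_of_not_allowed {a b : Fin (d + 1)} (h : ¬Allowed a b) :
    ∀ l, ¬IsNormal (a :: b :: l)
  | [] => h
  | _ :: _ => fun hl => h hl.1

def xyPow : ℕ → List (Fin (d + 1))
  | 0 => []
  | m + 1 => 0 :: 1 :: xyPow m

@[simp] theorem xyPow_succ (m : ℕ) : (xyPow (m + 1) : List (Fin (d + 1))) = 0 :: 1 :: xyPow m :=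
  rfl

@[simp] theorem length_xyPow (m : ℕ) : (xyPow m : List (Fin (d + 1))).length = 2 * m := by
  induction m with
  | zero => rfl
  | succ m ih => simp only [xyPow_succ, List.length_cons, ih]; ring

def oddWord (m : ℕ) :
    {a : Fin (d + 1) // a ≠ 0} ⊕ {b : Fin (d + 1) // b ≠ 1} → List (Fin (d + 1))
  | .inl a => a.1 :: xyPow (m + 1)
  | .inr b => xyPow (m + 1) ++ [b.1]

def evenWord (m : ℕ) : Option ({a : Fin (d + 1) // a ≠ 0} × {b : Fin (d + 1) // b ≠ 1}) →
    List (Fin (d + 1))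
  | none => xyPow (m + 2)
  | some (a, b) => a.1 :: (xyPow (m + 1) ++ [b.1])

@[simp] theorem length_oddWord (m : ℕ) (i) : (oddWord (d := d) m i).length = 2 * m + 3 := by
  cases i <;> simp [oddWord]

@[simp] theorem length_evenWord (m : ℕ) (i) : (evenWord (d := d) m i).length = 2 * m + 4 := by
  rcases i with _ | ⟨a, b⟩ <;> simp [evenWord]

theorem oddWord_injective (m : ℕ) : Function.Injective (oddWord (d := d) m) := by
  rintro (⟨a, ha⟩ | ⟨b, hb⟩) (⟨a', ha'⟩ | ⟨b', hb'⟩) h <;>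
    simp_all [oddWord, eq_comm]

theorem evenWord_injective (m : ℕ) : Function.Injective (evenWord (d := d) m) := by
  rintro (_ | ⟨⟨a, ha⟩, ⟨b, hb⟩⟩) (_ | ⟨⟨a', ha'⟩, ⟨b', hb'⟩⟩) h <;>
    simp_all [evenWord, eq_comm]

section Normal

variable (h01 : (0 : Fin (d + 1)) ≠ 1)
include h01

theorem allowed_zero_one : Allowed (0 : Fin (d + 1)) 1 := by
  simp [Allowed, h01, h01.symm]

theorem allowed_one_left {b : Fin (d + 1)} (hb : b ≠ 1) : Allowed 1 b := by
  simp [Allowed, h01.symm, hb]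

theorem allowed_zero_right {a : Fin (d + 1)} (ha : a ≠ 0) : Allowed a 0 := by
  simp [Allowed, h01, ha]

theorem isNormal_xyPow_append {s : List (Fin (d + 1))} (hs : IsNormal (0 :: 1 :: s)) :
    ∀ m, IsNormal (xyPow (m + 1) ++ s)
  | 0 => hs
  | m + 1 => ⟨allowed_zero_one h01, .inl ⟨rfl, rfl⟩, allowed_one_left h01 h01,
      .inr ⟨rfl, rfl⟩, isNormal_xyPow_append hs m⟩

theorem isNormal_xyPow (m : ℕ) : IsNormal (xyPow (d := d) (m + 1)) := by
  simpa using isNormal_xyPow_append h01 (s := []) (allowed_zero_one h01) m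

theorem isNormal_xyPow_append_singleton (m : ℕ) {b : Fin (d + 1)} (hb : b ≠ 1) :
    IsNormal (xyPow (m + 1) ++ [b]) :=
  isNormal_xyPow_append h01 (s := [b])
    ⟨allowed_zero_one h01, .inl ⟨rfl, rfl⟩, allowed_one_left h01 hb⟩ m

theorem isNormal_oddWord (m : ℕ) : ∀ i, IsNormal (oddWord (d := d) m i)
  | .inl ⟨_, ha⟩ => ⟨allowed_zero_right h01 ha, .inr ⟨rfl, rfl⟩, isNormal_xyPow h01 m⟩
  | .inr ⟨_, hb⟩ => isNormal_xyPow_append_singleton h01 m hb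

theorem isNormal_evenWord (m : ℕ) : ∀ i, IsNormal (evenWord (d := d) m i)
  | none => isNormal_xyPow h01 (m + 1)
  | some (⟨_, ha⟩, ⟨_, hb⟩) => ⟨allowed_zero_right h01 ha, .inr ⟨rfl, rfl⟩,
      isNormal_xyPow_append_singleton h01 m hb⟩

end Normal

theorem IsNormal.cons_oddWord_mem_range {m : ℕ} {a : Fin (d + 1)} {i}
    (h : IsNormal (a :: oddWord m i)) : a :: oddWord m i ∈ Set.range (evenWord m) := by
  rcases i with ⟨a', ha'⟩ | ⟨b, hb⟩
  · obtain ⟨-, ⟨rfl, rfl⟩ | ⟨rfl, -⟩, -⟩ := h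
    · exact ⟨none, rfl⟩
    · exact absurd rfl ha'
  · exact ⟨some (⟨a, fun ha => h.1.1 ⟨ha, rfl⟩⟩, ⟨b, hb⟩), rfl⟩

theorem IsNormal.cons_evenWord_mem_range {m : ℕ} {a : Fin (d + 1)} {i}
    (h : IsNormal (a :: evenWord m i)) : a :: evenWord m i ∈ Set.range (oddWord (m + 1)) := by
  rcases i with _ | ⟨⟨a', ha'⟩, ⟨b, hb⟩⟩
  · exact ⟨.inl ⟨a, fun ha => h.1.1 ⟨ha, rfl⟩⟩, rfl⟩
  · obtain ⟨-, ⟨rfl, rfl⟩ | ⟨rfl, -⟩, -⟩ := h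
    · exact ⟨.inr ⟨b, hb⟩, rfl⟩
    · exact absurd rfl ha'

theorem IsNormal.exists_mem_range_of_three_le {l : List (Fin (d + 1))} (hl : IsNormal l)
    (h3 : 3 ≤ l.length) :
    (∃ m, l ∈ Set.range (oddWord m)) ∨ ∃ m, l ∈ Set.range (evenWord m) := by
  obtain ⟨a, b, c, t, rfl⟩ : ∃ a b c t, l = a :: b :: c :: t := by
    match l, h3 with
    | a :: b :: c :: t, _ => exact ⟨a, b, c, t, rfl⟩
  induction t generalizing a b c with
  | nil =>
    obtain ⟨hab, ⟨rfl, rfl⟩ | ⟨rfl, rfl⟩, hbc⟩ := hl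
    · exact .inl ⟨0, .inr ⟨c, fun hc => hbc.2 ⟨rfl, hc⟩⟩, rfl⟩
    · exact .inl ⟨0, .inl ⟨a, fun ha => hab.1 ⟨ha, rfl⟩⟩, rfl⟩
  | cons x t ih =>
    rcases ih b c x hl.of_cons (by simp) with ⟨m, i, hi⟩ | ⟨m, i, hi⟩ <;>
      rw [← hi] at hl ⊢
    · exact .inr ⟨m, hl.cons_oddWord_mem_range⟩
    · exact .inl ⟨m + 1, hl.cons_evenWord_mem_range⟩

theorem range_oddWord (h01 : (0 : Fin (d + 1)) ≠ 1) (m : ℕ) :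
    Set.range (oddWord (d := d) m) = {l | l.length = 2 * m + 3 ∧ IsNormal l} := by
  ext l
  constructor
  · rintro ⟨i, rfl⟩
    exact ⟨length_oddWord m i, isNormal_oddWord h01 m i⟩
  · rintro ⟨hlen, hl⟩
    rcases hl.exists_mem_range_of_three_le (by omega) with ⟨m', i, rfl⟩ | ⟨m', i, rfl⟩
    · obtain rfl : m' = m := by simp only [length_oddWord] at hlen; omega
      exact ⟨i, rfl⟩
    · simp only [length_evenWord] at hlen; omega

theorem range_evenWord (h01 : (0 : Fin (d + 1)) ≠ 1) (m : ℕ) :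
    Set.range (evenWord (d := d) m) = {l | l.length = 2 * m + 4 ∧ IsNormal l} := by
  ext l
  constructor
  · rintro ⟨i, rfl⟩
    exact ⟨length_evenWord m i, isNormal_evenWord h01 m i⟩
  · rintro ⟨hlen, hl⟩
    rcases hl.exists_mem_range_of_three_le (by omega) with ⟨m', i, rfl⟩ | ⟨m', i, rfl⟩
    · simp only [length_oddWord] at hlen; omega
    · obtain rfl : m' = m := by simp only [length_evenWord] at hlen; omega
      exact ⟨i, rfl⟩

end Words

def ofWord (l : List (Fin (d + 1))) : Ralg F d := proj F d (l.map (gen F d)).prod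

theorem ofWord_append (l₁ l₂ : List (Fin (d + 1))) :
    ofWord F d (l₁ ++ l₂) = ofWord F d l₁ * ofWord F d l₂ := by
  simp [ofWord]

theorem ofWord_eq_zero_of_mem_relSet {l : List (Fin (d + 1))}
    (hl : (l.map (gen F d)).prod ∈ relSet F d) :
    ofWord F d l = 0 :=
  (RingQuot.mkAlgHom_rel F (s := rel F d) ⟨hl, rfl⟩).trans (map_zero _)

theorem ofWord_eq_zero_of_not_allowed {a b : Fin (d + 1)} (h : ¬Allowed a b) :
    ofWord F d [a, b] = 0 := by
  apply ofWord_eq_zero_of_mem_relSet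
  have : (a = 0 ∧ b = 0) ∨ (a = 1 ∧ b = 1) := by unfold Allowed at h; tauto
  rcases this with ⟨rfl, rfl⟩ | ⟨rfl, rfl⟩ <;> simp [relSet]

theorem ofWord_eq_zero_of_not_hasXY {a b c : Fin (d + 1)} (h : ¬HasXY a b c) :
    ofWord F d [a, b, c] = 0 :=
  ofWord_eq_zero_of_mem_relSet F d (.inr ⟨a, b, c, by simp [mul_assoc], h⟩)

theorem ofWord_eq_zero_of_not_isNormal :
    ∀ l : List (Fin (d + 1)), ¬IsNormal l → ofWord F d l = 0
  | [], h | [_], h => absurd trivial h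
  | [_, _], h => ofWord_eq_zero_of_not_allowed F d h
  | a :: b :: c :: t, h => by
    simp only [IsNormal, not_and_or] at h
    rcases h with h | h | h
    · rw [show a :: b :: c :: t = [a, b] ++ c :: t from rfl, ofWord_append,
        ofWord_eq_zero_of_not_allowed F d h, zero_mul]
    · rw [show a :: b :: c :: t = [a, b, c] ++ t from rfl, ofWord_append,
        ofWord_eq_zero_of_not_hasXY F d h, zero_mul]
    · rw [show a :: b :: c :: t = [a] ++ b :: c :: t from rfl, ofWord_append,
        ofWord_eq_zero_of_not_isNormal _ h, mul_zero]

theorem exists_cons_of_mem_relSet {u : FreeAlgebra F (Fin (d + 1))} (hu : u ∈ relSet F d) :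
    ∃ a w, u = ((a :: w).map (FreeAlgebra.ι F)).prod ∧ ∀ l, ¬IsNormal (a :: (w ++ l)) := by
  rcases hu with (rfl | rfl) | ⟨a, b, c, rfl, h⟩
  · exact ⟨0, [0], by simp [gen], not_isNormal_of_not_allowed (by simp [Allowed])⟩
  · exact ⟨1, [1], by simp [gen], not_isNormal_of_not_allowed (by simp [Allowed])⟩
  · exact ⟨a, [b, c], by simp [gen, mul_assoc], fun l hl => h hl.2.1⟩

theorem linearIndependent_ofWord :
    LinearIndependent F fun l : {l : List (Fin (d + 1)) // IsNormal l} => ofWord F d l.1 := by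
  refine FreeAlgebra.linearIndependent_mkAlgHom_prod F (fun _ _ => IsNormal.of_cons) ?_
  rintro u v ⟨hu, rfl⟩
  obtain ⟨a, w, rfl, hw⟩ := exists_cons_of_mem_relSet F d hu
  refine Finsupp.lhom_ext fun l c => ?_
  rw [FreeAlgebra.lift_prependOp_prod_cons F (fun _ _ => IsNormal.of_cons), if_neg (hw l),
    map_zero, LinearMap.zero_apply]

theorem comp_eq_span_ofWord (n : ℕ) :
    comp F d n = Submodule.span F (ofWord F d '' {l | l.length = n ∧ IsNormal l}) := by
  have hword :
      (fun w : Fin n → Fin (d + 1) => proj F d (List.ofFn fun j => gen F d (w j)).prod) =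
        fun w => ofWord F d (List.ofFn w) := by
    simp [ofWord, List.map_ofFn, Function.comp_def]
  rw [comp, hword]
  apply le_antisymm <;> rw [Submodule.span_le]
  · rintro _ ⟨w, rfl⟩
    by_cases hw : IsNormal (List.ofFn w)
    · exact Submodule.subset_span ⟨_, ⟨List.length_ofFn, hw⟩, rfl⟩
    · simpa only [ofWord_eq_zero_of_not_isNormal F d _ hw, SetLike.mem_coe]
        using Submodule.zero_mem _
  · rintro _ ⟨l, ⟨rfl, -⟩, rfl⟩
    exact Submodule.subset_span ⟨fun j => l[(j : ℕ)], by simp only [List.ofFn_getElem]⟩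

theorem finrank_comp_eq_card (n : ℕ) {ι : Type*} [Fintype ι] {g : ι → List (Fin (d + 1))}
    (hg : Function.Injective g) (hrange : Set.range g = {l | l.length = n ∧ IsNormal l}) :
    Module.finrank F (comp F d n) = Fintype.card ι := by
  have hnormal (i : ι) : IsNormal (g i) := (hrange.subset ⟨i, rfl⟩).2
  rw [comp_eq_span_ofWord, ← hrange, ← Set.range_comp]
  exact finrank_span_eq_card <| (linearIndependent_ofWord F d).comp (fun i => ⟨g i, hnormal i⟩)
    fun i j h => hg (congrArg Subtype.val h)

end XYAlgebra

open XYAlgebra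

theorem stmt_8 (hd : 1 ≤ d) (n : ℕ) (hn : 2 < n) :
    (Odd n → Module.finrank F (comp F d n) = 2 * d) ∧
    (Even n → Module.finrank F (comp F d n) = d ^ 2 + 1) := by
  have : NeZero d := ⟨by omega⟩
  have h01 : (0 : Fin (d + 1)) ≠ 1 := Fin.zero_ne_one'
  refine ⟨fun ⟨k, hk⟩ => ?_, fun ⟨k, hk⟩ => ?_⟩
  · obtain ⟨m, rfl⟩ : ∃ m, n = 2 * m + 3 := ⟨k - 1, by omega⟩
    rw [finrank_comp_eq_card F d _ (oddWord_injective m) (range_oddWord h01 m)]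
    simp [two_mul]
  · obtain ⟨m, rfl⟩ : ∃ m, n = 2 * m + 4 := ⟨k - 2, by omega⟩
    rw [finrank_comp_eq_card F d _ (evenWord_injective m) (range_evenWord h01 m)]
    simp [sq]

end
end

section
/- For any prime p > 2 there exists a commutative semigroup S with zero and a subset X ⊆ S with card(X^p \ {0}) = card(X \ {0}), but such that for all i with 1 < i < p, card(X^i \ {0}) < card(X \ {0}). -/
open Pointwise

/-- A witness for Statement 14: a commutative semigroup $S$ with zero and a finite subset
$X$ with $\mathrm{card}(X^p\setminus\{0\}) = \mathrm{card}(X\setminus\{0\})$ but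
$\mathrm{card}(X^i\setminus\{0\}) < \mathrm{card}(X\setminus\{0\})$ for $1<i<p$. -/
structure Stmt14Witness (p : ℕ) where
  S : Type
  [inst : SemigroupWithZero S]
  comm : ∀ a b : S, a * b = b * a
  X : Set S
  Xfin : X.Finite
  card_eq : (pw X p \ {0}).ncard = (X \ {0}).ncard
  card_lt : ∀ i, 1 < i → i < p → (pw X i \ {0}).ncard < (X \ {0}).ncard

/-! The semigroup of the paper lives in the commutative semiring `ℕ × ℕ × ℕ[ε]`: `x = (2, 1, 0)`
and `y = (1, 2, 0)` generate a free commutative semigroup, as `x ^ a * y ^ b = (2 ^ a, 2 ^ b, 0)`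
for `a + b > 0`, and the `p - 1` elements `zⱼ = (0, 0, j ε)` kill every generator. Hence
`X ^ i = {x ^ a * y ^ b | a + b = i} ∪ {0}` for `i ≥ 2`, with `i + 1` nonzero elements, against the
`p + 1` nonzero elements of `X`; the two counts first agree at `i = p`. -/
section Annihilators

variable {S : Type*} [SemigroupWithZero S]

lemma mul_pw_subset_zero {Z Y : Set S} (hZY : Z * Y ⊆ {0}) :
    ∀ k, Z * pw Y (k + 1) ⊆ {0}
  | 0 => hZY
  | k + 1 => calc
      Z * pw Y (k + 2) = Z * Y * pw Y (k + 1) := (mul_assoc ..).symm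
      _ ⊆ 0 * pw Y (k + 1) := Set.mul_subset_mul_right hZY
      _ ⊆ {0} := Set.zero_mul_subset _

lemma union_mul_union_eq {Y Z B C : Set S} (hZ : Z.Nonempty) (hC : C.Nonempty)
    (hZBC : Z * (B ∪ C) ⊆ {0}) (hYC : Y * C ⊆ {0}) :
    (Y ∪ Z) * (B ∪ C) = Y * B ∪ {0} := by
  have hZBC' : Z * (B ∪ C) = {0} :=
    ((hZ.mul (hC.mono Set.subset_union_right)).subset_singleton_iff).mp hZBC
  rw [Set.union_mul, hZBC', Set.mul_union, Set.union_assoc,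
    Set.union_eq_self_of_subset_left hYC]

lemma pw_union_eq_of_mul_eq_zero {Y Z : Set S} (hZ : Z.Nonempty)
    (hZl : Z * (Y ∪ Z) ⊆ {0}) (hZr : (Y ∪ Z) * Z ⊆ {0}) :
    ∀ k, pw (Y ∪ Z) (k + 2) = pw Y (k + 2) ∪ {0}
  | 0 => union_mul_union_eq hZ hZ hZl ((Set.mul_subset_mul_right Set.subset_union_left).trans hZr)
  | k + 1 => by
    have hZY : Z * Y ⊆ {0} := (Set.mul_subset_mul_left Set.subset_union_left).trans hZl
    show (Y ∪ Z) * pw (Y ∪ Z) (k + 2) = Y * pw Y (k + 2) ∪ {0}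
    rw [pw_union_eq_of_mul_eq_zero hZ hZl hZr k]
    refine union_mul_union_eq hZ (Set.singleton_nonempty 0) ?_ (Set.mul_zero_subset Y)
    rw [Set.mul_union]
    exact Set.union_subset (mul_pw_subset_zero hZY (k + 1)) (Set.mul_zero_subset Z)

end Annihilators

section Monomials

open Finset.HasAntidiagonal

variable {M : Type*} [CommMonoid M] (x y : M)

def monomialsOfDegree (n : ℕ) : Set M :=
  (fun ab : ℕ × ℕ => x ^ ab.1 * y ^ ab.2) '' ↑(antidiagonal n)

lemma pair_mul_monomialsOfDegree (n : ℕ) :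
    {x, y} * monomialsOfDegree x y n = monomialsOfDegree x y (n + 1) := by
  ext m
  simp only [monomialsOfDegree, Set.mem_mul, Set.mem_insert_iff, Set.mem_singleton_iff,
    Set.mem_image, Finset.mem_coe, mem_antidiagonal, Prod.exists]
  constructor
  · rintro ⟨_, rfl | rfl, _, ⟨a, b, hab, rfl⟩, rfl⟩
    · exact ⟨a + 1, b, by omega, by rw [pow_succ', mul_assoc]⟩
    · exact ⟨a, b + 1, by omega, by rw [pow_succ', mul_left_comm]⟩
  · rintro ⟨a | a, b, hab, rfl⟩
    · obtain ⟨b, rfl⟩ : ∃ c, b = c + 1 := ⟨b - 1, by omega⟩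
      exact ⟨y, Or.inr rfl, _, ⟨0, b, by omega, rfl⟩, by rw [pow_succ', mul_left_comm]⟩
    · exact ⟨x, Or.inl rfl, _, ⟨a, b, by omega, rfl⟩, by rw [pow_succ', mul_assoc]⟩

lemma pw_pair_eq_monomialsOfDegree : ∀ n, pw {x, y} (n + 1) = monomialsOfDegree x y (n + 1)
  | 0 => by
    rw [← pair_mul_monomialsOfDegree]
    simp [pw, monomialsOfDegree]
  | n + 1 => by
    rw [← pair_mul_monomialsOfDegree, ← pw_pair_eq_monomialsOfDegree n]
    rfl

lemma ncard_monomialsOfDegree (hxy : Function.Injective fun ab : ℕ × ℕ => x ^ ab.1 * y ^ ab.2)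
    (n : ℕ) : (monomialsOfDegree x y n).ncard = n + 1 := by
  rw [monomialsOfDegree, Set.ncard_image_of_injective _ hxy, Set.ncard_coe_finset,
    Finset.Nat.card_antidiagonal]

end Monomials

namespace MonomialWitness

open TrivSqZeroExt

abbrev S := ℕ × ℕ × DualNumber ℕ

def x : S := (2, 1, 0)

def y : S := (1, 2, 0)

def Z (n : ℕ) : Set S := (fun j : ℕ => (0, 0, inr j)) '' Set.Icc 1 n

def X (n : ℕ) : Set S := {x, y} ∪ Z n

lemma monomial_eq (a b : ℕ) : x ^ a * y ^ b = (2 ^ a, 2 ^ b, 0 ^ a * 0 ^ b) := by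
  simp [x, y]

lemma monomial_injective : Function.Injective fun ab : ℕ × ℕ => x ^ ab.1 * y ^ ab.2 := by
  rintro ⟨a, b⟩ ⟨c, d⟩ h
  simp only [monomial_eq, Prod.mk.injEq] at h
  rw [Nat.pow_right_injective le_rfl h.1, Nat.pow_right_injective le_rfl h.2.1]

lemma zero_notMem_monomialsOfDegree (n : ℕ) : (0 : S) ∉ monomialsOfDegree x y n := by
  rintro ⟨⟨a, b⟩, -, h⟩
  simp [monomial_eq, Prod.ext_iff] at h

lemma Z_nonempty {n : ℕ} (hn : 0 < n) : (Z n).Nonempty :=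
  (Set.nonempty_Icc.mpr hn).image _

lemma Z_mul_X_subset (n : ℕ) : Z n * X n ⊆ {0} := by
  rintro _ ⟨_, ⟨j, -, rfl⟩, s, hs, rfl⟩
  rcases hs with (rfl | rfl) | ⟨k, -, rfl⟩ <;> simp [x, y, -DualNumber.inr_eq_smul_eps]

lemma pw_X_eq (n : ℕ) (hn : 0 < n) (k : ℕ) :
    pw (X n) (k + 2) = monomialsOfDegree x y (k + 2) ∪ {0} := by
  rw [X, pw_union_eq_of_mul_eq_zero (Z_nonempty hn) (Z_mul_X_subset n)
    (mul_comm (X n) (Z n) ▸ Z_mul_X_subset n), pw_pair_eq_monomialsOfDegree]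

lemma ncard_pw_X_diff_zero (n : ℕ) (hn : 0 < n) (k : ℕ) :
    (pw (X n) (k + 2) \ {0}).ncard = k + 3 := by
  rw [pw_X_eq n hn, Set.union_sdiff_right,
    Set.sdiff_singleton_eq_self (zero_notMem_monomialsOfDegree _),
    ncard_monomialsOfDegree x y monomial_injective]

lemma ncard_Z (n : ℕ) : (Z n).ncard = n := by
  rw [Z, Set.ncard_image_of_injective _ (fun i j h => inr_injective (congrArg (·.2.2) h)),
    ← Finset.coe_Icc, Set.ncard_coe_finset, Nat.card_Icc, Nat.add_sub_cancel]

lemma ncard_X_diff_zero (n : ℕ) : (X n \ {0}).ncard = n + 2 := by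
  have hxy : x ≠ y := by simp [x, y]
  have hdisj : Disjoint {x, y} (Z n) := by
    rw [Set.disjoint_left]
    rintro _ (rfl | rfl) ⟨j, -, h⟩ <;>
      simp [x, y, Prod.ext_iff, -DualNumber.inr_eq_smul_eps] at h
  have h0 : (0 : S) ∉ X n := by
    rintro ((h | h) | ⟨j, hj, h⟩) <;> simp [x, y, Prod.ext_iff, -DualNumber.inr_eq_smul_eps] at h
    have : j = 0 := inr_injective (h.trans (inr_zero ℕ).symm)
    exact absurd hj.1 (by omega)
  rw [Set.sdiff_singleton_eq_self h0, X,
    Set.ncard_union_eq hdisj (Set.toFinite _) ((Set.finite_Icc 1 n).image _),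
    Set.ncard_pair hxy, ncard_Z, add_comm]

lemma X_finite (n : ℕ) : (X n).Finite :=
  (Set.toFinite {x, y}).union ((Set.finite_Icc 1 n).image _)

end MonomialWitness

open MonomialWitness in
theorem stmt_14_general (p : ℕ) (hp2 : 2 < p) : Nonempty (Stmt14Witness p) := by
  obtain ⟨n, rfl⟩ : ∃ n, p = n + 1 := ⟨p - 1, by omega⟩
  refine ⟨⟨S, mul_comm, X n, X_finite n, ?_, ?_⟩⟩
  · obtain ⟨k, hk⟩ : ∃ k, n + 1 = k + 2 := ⟨n - 1, by omega⟩
    rw [hk, ncard_pw_X_diff_zero n (by omega), ncard_X_diff_zero]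
    omega
  · intro i hi hip
    obtain ⟨k, rfl⟩ : ∃ k, i = k + 2 := ⟨i - 2, by omega⟩
    rw [ncard_pw_X_diff_zero n (by omega), ncard_X_diff_zero]
    omega

theorem stmt_14 (p : ℕ) (hp : p.Prime) (hp2 : 2 < p) : Nonempty (Stmt14Witness p) :=
  stmt_14_general p hp2
end

section
/- For every positive integer d there exists a graded, nilpotent, commutative, nonassociative algebra R = R_1 ⊕ R_2 ⊕ R_3 over the real numbers, generated by R_1, with dim R_1 = d, dim R_2 = 1, dim R_3 = d, such that the cubing map r ↦ r(rr) restricts to a bijection from R_1 onto R_3. Hence, setting R^(3) = {r(rr) : r ∈ R} = R_3, one has dim R^(3)/dim R = d/(2d+1), which exceeds 1/3 whenever d > 1. -/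
open Pointwise

/-- Product of submodules of a (possibly nonunital) algebra: the span of the
set of products. -/
noncomputable instance submul {F R : Type*} [Semiring F] [NonUnitalNonAssocSemiring R]
    [Module F R] : Mul (Submodule F R) :=
  ⟨fun V W => Submodule.span F (Set.image2 (· * ·) (V : Set R) (W : Set R))⟩
/-- A witness for Statement 18: a graded, nilpotent, commutative, nonassociative real
algebra $R = R_1 \oplus R_2 \oplus R_3$ generated by $R_1$, with dimensions $d, 1, d$,
on which cubing $r \mapsto r(rr)$ is a bijection from $R_1$ onto $R_3$, and whose set of
cubes is exactly $R_3$. -/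
structure Stmt18Witness (d : ℕ) where
  R : Type
  [ring : NonUnitalNonAssocCommRing R]
  [mod : Module ℝ R]
  [scc : SMulCommClass ℝ R R]
  [ist : IsScalarTower ℝ R R]
  grading : ℕ → Submodule ℝ R
  mul_le : ∀ i j, grading i * grading j ≤ grading (i + j)
  internal : DirectSum.IsInternal grading
  zero_bot : grading 0 = ⊥
  high_bot : ∀ i, 4 ≤ i → grading i = ⊥
  gen : NonUnitalAlgebra.adjoin ℝ ((grading 1 : Submodule ℝ R) : Set R) = ⊤
  dim1 : Module.finrank ℝ (grading 1) = d
  dim2 : Module.finrank ℝ (grading 2) = 1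
  dim3 : Module.finrank ℝ (grading 3) = d
  dimR : Module.finrank ℝ R = 2 * d + 1
  nilpotent : ∀ a b c e : R,
    (a * b) * (c * e) = 0 ∧ a * (b * (c * e)) = 0 ∧ a * ((b * c) * e) = 0 ∧
      ((a * b) * c) * e = 0 ∧ (a * (b * c)) * e = 0
  cube_bij : Set.BijOn (fun r : R => r * (r * r)) (grading 1) (grading 3)
  cube_range : (Set.range fun r : R => r * (r * r)) = ((grading 3 : Submodule ℝ R) : Set R)

/-! In `R = Wx ⊕ ℝx² ⊕ Wx³ ⊆ (W ⊕ ℝ) ⊗ ℝ[x]/(x⁴)`, only the degree-one part `a` of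
`r = ax + bx² + cx³` survives in the cube: `r(rr) = ‖a‖² a x³`. The map `w ↦ ‖w‖² w` is a
bijection of `W`, since it preserves rays and acts on norms as `t ↦ t³`. -/

open RealInnerProductSpace

theorem DirectSum.isInternal_range_of_orthogonalIdempotents {ι R M : Type*} [Ring R]
    [AddCommGroup M] [Module R M] [DecidableEq ι] {π : ι → Module.End R M}
    (hπ : OrthogonalIdempotents π) (s : Finset ι) (hsum : ∑ i ∈ s, π i = 1) :
    DirectSum.IsInternal fun i => LinearMap.range (π i) := by
  refine DirectSum.isInternal_submodule_of_iSupIndep_of_iSup_eq_top ?_ ?_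
  · intro i
    rw [Submodule.disjoint_def]
    intro x hx hx'
    have hker : (⨆ j ≠ i, LinearMap.range (π j)) ≤ LinearMap.ker (π i) := by
      refine iSup₂_le fun j hj => ?_
      rintro _ ⟨y, rfl⟩
      rw [LinearMap.mem_ker, ← Module.End.mul_apply, hπ.ortho hj.symm, LinearMap.zero_apply]
    rw [← LinearMap.IsIdempotentElem.mem_range_iff (hπ.idem i) |>.1 hx]
    exact hker hx'
  · refine eq_top_iff.2 fun x _ => ?_
    rw [← Module.End.one_apply (R := R) x, ← hsum, LinearMap.sum_apply]
    exact Submodule.sum_mem _ fun i _ => Submodule.mem_iSup_of_mem i ⟨x, rfl⟩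

theorem bijective_norm_pow_smul (E : Type*) [NormedAddCommGroup E] [NormedSpace ℝ E]
    (k : ℕ) : Function.Bijective fun v : E => ‖v‖ ^ k • v := by
  have norm_eq (v : E) : ‖‖v‖ ^ k • v‖ = ‖v‖ ^ (k + 1) := by
    rw [norm_smul, norm_pow, norm_norm, pow_succ]
  refine ⟨fun u v huv => ?_, fun w => ?_⟩
  · have hnorm : ‖u‖ = ‖v‖ :=
      (pow_left_inj₀ (norm_nonneg u) (norm_nonneg v) k.succ_ne_zero).1 <| by
        rw [← norm_eq, ← norm_eq]; exact congrArg norm huv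
    rcases eq_or_ne ‖u‖ 0 with h0 | h0
    · rw [norm_eq_zero.1 h0, norm_eq_zero.1 (hnorm ▸ h0 : ‖v‖ = 0)]
    · simp only [hnorm] at huv
      exact smul_right_injective E (pow_ne_zero k (hnorm ▸ h0)) huv
  · rcases eq_or_ne w 0 with rfl | hw
    · exact ⟨0, by simp⟩
    set s := ‖w‖ ^ ((k + 1 : ℕ)⁻¹ : ℝ)
    have hs : s ^ (k + 1) = ‖w‖ := Real.rpow_inv_natCast_pow (norm_nonneg w) k.succ_ne_zero
    refine ⟨(s / ‖w‖) • w, ?_⟩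
    have hw' : ‖w‖ ≠ 0 := norm_ne_zero_iff.2 hw
    dsimp only
    rw [norm_smul, norm_div, norm_norm, Real.norm_of_nonneg (by positivity),
      div_mul_cancel₀ _ hw', smul_smul, ← mul_div_assoc, ← pow_succ, hs, div_self hw', one_smul]

/-- The element `a x + b x² + c x³` of `(W ⊕ ℝ) ⊗ ℝ[x]/(x⁴)`, where `W ⊕ ℝ` multiplies
elements of `W` by their inner product and `ℝ` acts by scalars. -/
@[ext]
structure InnerNilAlgebra (W : Type*) where
  a : W
  b : ℝ
  c : W

namespace InnerNilAlgebra

def equivProd (W : Type*) : InnerNilAlgebra W ≃ W × ℝ × W where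
  toFun p := (p.a, p.b, p.c)
  invFun q := ⟨q.1, q.2.1, q.2.2⟩

section Module

variable {W : Type*} [AddCommGroup W]

instance : AddCommGroup (InnerNilAlgebra W) := (equivProd W).addCommGroup

@[simp] lemma zero_a : (0 : InnerNilAlgebra W).a = 0 := rfl
@[simp] lemma zero_b : (0 : InnerNilAlgebra W).b = 0 := rfl
@[simp] lemma zero_c : (0 : InnerNilAlgebra W).c = 0 := rfl
@[simp] lemma add_a (p q : InnerNilAlgebra W) : (p + q).a = p.a + q.a := rfl
@[simp] lemma add_b (p q : InnerNilAlgebra W) : (p + q).b = p.b + q.b := rfl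
@[simp] lemma add_c (p q : InnerNilAlgebra W) : (p + q).c = p.c + q.c := rfl

variable [Module ℝ W]

instance : Module ℝ (InnerNilAlgebra W) := (equivProd W).module ℝ

@[simp] lemma smul_a (r : ℝ) (p : InnerNilAlgebra W) : (r • p).a = r • p.a := rfl
@[simp] lemma smul_b (r : ℝ) (p : InnerNilAlgebra W) : (r • p).b = r * p.b := rfl
@[simp] lemma smul_c (r : ℝ) (p : InnerNilAlgebra W) : (r • p).c = r • p.c := rfl

variable (W)

def linearEquivProd : InnerNilAlgebra W ≃ₗ[ℝ] W × ℝ × W := (equivProd W).linearEquiv ℝ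

def ofDeg1 : W →ₗ[ℝ] InnerNilAlgebra W :=
  (linearEquivProd W).symm.toLinearMap ∘ₗ LinearMap.inl ℝ W (ℝ × W)

def ofDeg2 : ℝ →ₗ[ℝ] InnerNilAlgebra W :=
  (linearEquivProd W).symm.toLinearMap ∘ₗ LinearMap.inr ℝ W (ℝ × W) ∘ₗ LinearMap.inl ℝ ℝ W

def ofDeg3 : W →ₗ[ℝ] InnerNilAlgebra W :=
  (linearEquivProd W).symm.toLinearMap ∘ₗ LinearMap.inr ℝ W (ℝ × W) ∘ₗ LinearMap.inr ℝ ℝ W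

variable {W}

@[simp] lemma ofDeg1_apply (w : W) : ofDeg1 W w = ⟨w, 0, 0⟩ := rfl
@[simp] lemma ofDeg2_apply (r : ℝ) : ofDeg2 W r = ⟨0, r, 0⟩ := rfl
@[simp] lemma ofDeg3_apply (w : W) : ofDeg3 W w = ⟨0, 0, w⟩ := rfl

lemma ofDeg1_injective : Function.Injective (ofDeg1 W) := fun _ _ h => congrArg a h
lemma ofDeg2_injective : Function.Injective (ofDeg2 W) := fun _ _ h => congrArg b h
lemma ofDeg3_injective : Function.Injective (ofDeg3 W) := fun _ _ h => congrArg c h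

def proj (i : ℕ) : Module.End ℝ (InnerNilAlgebra W) where
  toFun p := ⟨if i = 1 then p.a else 0, if i = 2 then p.b else 0, if i = 3 then p.c else 0⟩
  map_add' p q := by ext <;> simp only [add_a, add_b, add_c] <;> split_ifs <;> simp
  map_smul' r p := by ext <;> simp only [smul_a, smul_b, smul_c] <;> split_ifs <;> simp

@[simp] lemma proj_apply (i : ℕ) (p : InnerNilAlgebra W) :
    proj i p = ⟨if i = 1 then p.a else 0, if i = 2 then p.b else 0, if i = 3 then p.c else 0⟩ :=
  rfl

lemma orthogonalIdempotents_proj : OrthogonalIdempotents (proj (W := W)) where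
  idem i := by ext p <;> simp +contextual
  ortho i j hij := by ext p <;> simp <;> omega

lemma sum_proj : ∑ i ∈ {1, 2, 3}, proj (W := W) i = 1 := by
  ext p <;> simp

variable (W) in
def grading (i : ℕ) : Submodule ℝ (InnerNilAlgebra W) := LinearMap.range (proj i)

lemma isInternal_grading : DirectSum.IsInternal (grading W) :=
  DirectSum.isInternal_range_of_orthogonalIdempotents orthogonalIdempotents_proj _ sum_proj

lemma mem_grading_iff {i : ℕ} {p : InnerNilAlgebra W} : p ∈ grading W i ↔ proj i p = p :=
  LinearMap.IsIdempotentElem.mem_range_iff (orthogonalIdempotents_proj.idem i)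

lemma grading_eq_bot {i : ℕ} (h1 : i ≠ 1) (h2 : i ≠ 2) (h3 : i ≠ 3) : grading W i = ⊥ := by
  rw [grading, LinearMap.range_eq_bot]
  ext p <;> simp [h1, h2, h3]

lemma grading_one : grading W 1 = LinearMap.range (ofDeg1 W) := by
  ext p
  simp [mem_grading_iff, InnerNilAlgebra.ext_iff]

lemma grading_two : grading W 2 = LinearMap.range (ofDeg2 W) := by
  ext p
  simp [mem_grading_iff, InnerNilAlgebra.ext_iff]

lemma grading_three : grading W 3 = LinearMap.range (ofDeg3 W) := by
  ext p
  simp [mem_grading_iff, InnerNilAlgebra.ext_iff]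

lemma finrank_grading_one : Module.finrank ℝ (grading W 1) = Module.finrank ℝ W := by
  rw [grading_one, LinearMap.finrank_range_of_inj ofDeg1_injective]

lemma finrank_grading_two : Module.finrank ℝ (grading W 2) = 1 := by
  rw [grading_two, LinearMap.finrank_range_of_inj ofDeg2_injective, Module.finrank_self]

lemma finrank_grading_three : Module.finrank ℝ (grading W 3) = Module.finrank ℝ W := by
  rw [grading_three, LinearMap.finrank_range_of_inj ofDeg3_injective]

lemma finrank_eq [FiniteDimensional ℝ W] :
    Module.finrank ℝ (InnerNilAlgebra W) = 2 * Module.finrank ℝ W + 1 := by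
  rw [(linearEquivProd W).finrank_eq, Module.finrank_prod, Module.finrank_prod,
    Module.finrank_self]
  ring

end Module

variable {W : Type*} [NormedAddCommGroup W] [InnerProductSpace ℝ W]

instance : Mul (InnerNilAlgebra W) := ⟨fun p q => ⟨0, ⟪p.a, q.a⟫, p.b • q.a + q.b • p.a⟩⟩

@[simp] lemma mul_a (p q : InnerNilAlgebra W) : (p * q).a = 0 := rfl
@[simp] lemma mul_b (p q : InnerNilAlgebra W) : (p * q).b = ⟪p.a, q.a⟫ := rfl
@[simp] lemma mul_c (p q : InnerNilAlgebra W) : (p * q).c = p.b • q.a + q.b • p.a := rfl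

instance : NonUnitalNonAssocCommRing (InnerNilAlgebra W) where
  left_distrib p q r := by ext <;> simp [inner_add_right]; module
  right_distrib p q r := by ext <;> simp [inner_add_left]; module
  zero_mul p := by ext <;> simp
  mul_zero p := by ext <;> simp
  mul_comm p q := by ext <;> simp [real_inner_comm, add_comm]

instance : SMulCommClass ℝ (InnerNilAlgebra W) (InnerNilAlgebra W) :=
  ⟨fun r p q => by ext <;> simp [real_inner_smul_right]; module⟩

instance : IsScalarTower ℝ (InnerNilAlgebra W) (InnerNilAlgebra W) :=
  ⟨fun r p q => by ext <;> simp [real_inner_smul_left]; module⟩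

lemma grading_mul_le (i j : ℕ) : grading W i * grading W j ≤ grading W (i + j) := by
  refine Submodule.span_le.2 <| Set.image2_subset_iff.2 fun p hp q hq => ?_
  rw [SetLike.mem_coe, mem_grading_iff] at *
  rw [← hp, ← hq]
  ext <;> simp <;> split_ifs <;> simp_all

lemma mul_mul_self_eq (p : InnerNilAlgebra W) : p * (p * p) = ofDeg3 W (‖p.a‖ ^ 2 • p.a) := by
  ext <;> simp

lemma mul_mul_mul_eq_zero (p q r s : InnerNilAlgebra W) :
    (p * q) * (r * s) = 0 ∧ p * (q * (r * s)) = 0 ∧ p * ((q * r) * s) = 0 ∧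
      ((p * q) * r) * s = 0 ∧ (p * (q * r)) * s = 0 := by
  refine ⟨?_, ?_, ?_, ?_, ?_⟩ <;> ext <;> simp

lemma bijOn_mul_mul_self : Set.BijOn (fun p : InnerNilAlgebra W => p * (p * p))
    (grading W 1) (grading W 3) := by
  have hbij := bijective_norm_pow_smul W 2
  rw [grading_one, grading_three]
  refine ⟨?_, ?_, ?_⟩
  · rintro _ ⟨w, rfl⟩
    exact ⟨_, (mul_mul_self_eq _).symm⟩
  · rintro _ ⟨u, rfl⟩ _ ⟨v, rfl⟩ h
    simp only [mul_mul_self_eq, ofDeg1_apply] at h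
    rw [hbij.injective (ofDeg3_injective h)]
  · rintro _ ⟨w, rfl⟩
    obtain ⟨v, rfl⟩ := hbij.surjective w
    exact ⟨ofDeg1 W v, ⟨v, rfl⟩, mul_mul_self_eq _⟩

lemma range_mul_mul_self :
    Set.range (fun p : InnerNilAlgebra W => p * (p * p)) = grading W 3 := by
  refine subset_antisymm ?_ (fun q hq => ?_)
  · rintro _ ⟨p, rfl⟩
    rw [grading_three]
    exact ⟨_, (mul_mul_self_eq p).symm⟩
  · obtain ⟨p, -, hp⟩ := bijOn_mul_mul_self.surjOn hq
    exact ⟨p, hp⟩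

lemma adjoin_grading_one [Nontrivial W] :
    NonUnitalAlgebra.adjoin ℝ (grading W 1 : Set (InnerNilAlgebra W)) = ⊤ := by
  obtain ⟨u, hu⟩ := exists_ne (0 : W)
  set S := NonUnitalAlgebra.adjoin ℝ (grading W 1 : Set (InnerNilAlgebra W))
  have deg1_mem (w : W) : ofDeg1 W w ∈ S :=
    NonUnitalAlgebra.subset_adjoin ℝ (by rw [grading_one]; exact ⟨w, rfl⟩)
  have x2_mem : ofDeg2 W 1 ∈ S := by
    have : ofDeg2 W 1 = (‖u‖ ^ 2)⁻¹ • (ofDeg1 W u * ofDeg1 W u) := by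
      ext <;> simp [hu]
    rw [this]
    exact SMulMemClass.smul_mem _ (mul_mem (deg1_mem u) (deg1_mem u))
  refine eq_top_iff.2 fun p _ => ?_
  have hp : p = ofDeg1 W p.a + p.b • ofDeg2 W 1 + ofDeg2 W 1 * ofDeg1 W p.c := by
    ext <;> simp
  rw [hp]
  exact add_mem (add_mem (deg1_mem _) (SMulMemClass.smul_mem _ x2_mem))
    (mul_mem x2_mem (deg1_mem _))

def stmt18Witness (W : Type) [NormedAddCommGroup W] [InnerProductSpace ℝ W]
    [FiniteDimensional ℝ W] [Nontrivial W] : Stmt18Witness (Module.finrank ℝ W) where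
  R := InnerNilAlgebra W
  grading := grading W
  mul_le := grading_mul_le
  internal := isInternal_grading
  zero_bot := grading_eq_bot (by norm_num) (by norm_num) (by norm_num)
  high_bot _ hi := grading_eq_bot (by omega) (by omega) (by omega)
  gen := adjoin_grading_one
  dim1 := finrank_grading_one
  dim2 := finrank_grading_two
  dim3 := finrank_grading_three
  dimR := finrank_eq
  nilpotent := mul_mul_mul_eq_zero
  cube_bij := bijOn_mul_mul_self
  cube_range := range_mul_mul_self

end InnerNilAlgebra

theorem stmt_18 (d : ℕ) (hd : 1 ≤ d) :
    Nonempty (Stmt18Witness d) ∧ (1 < d → (1 : ℚ) / 3 < (d : ℚ) / (2 * d + 1)) := by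
  refine ⟨?_, fun h => ?_⟩
  · have : Nontrivial (EuclideanSpace ℝ (Fin d)) :=
      Module.nontrivial_of_finrank_pos (by rw [finrank_euclideanSpace_fin (𝕜 := ℝ)]; omega)
    rw [← finrank_euclideanSpace_fin (𝕜 := ℝ) (n := d)]
    exact ⟨InnerNilAlgebra.stmt18Witness (EuclideanSpace ℝ (Fin d))⟩
  · have hd' : (1 : ℚ) < d := by exact_mod_cast h
    rw [div_lt_div_iff₀ (by norm_num) (by positivity)]
    linarith
end
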